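/- Let g be the Dirichlet inverse of ω + 1 and C_Ω(n) = Ω(n)! ∏_{p^α || n} (1/α!). Then for every n ≥ 1, g(n) = ∑_{d|n} λ(d) C_Ω(d) μ(n/d). -/

import Mathlib

open ArithmeticFunction Nat

/-- `C_Ω(n) = Ω(n)! / ∏_{p^α || n} α!`. -/
def COmega (n : ℕ) : ℕ :=
  (cardFactors n)! / ∏ p ∈ n.primeFactors, (n.factorization p)!
/-!
Let `χ` be the indicator function of the primes. Counting prime divisors gives `ω = ζ * χ`, so
`n ↦ ω(n) + 1` is `ζ * (1 + χ)` and its inverse is `(1 + χ)⁻¹ * μ`. The inverse of `1 + χ` is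
`n ↦ λ(n) C_Ω(n)`: as `λ(n / p) = -λ(n)` for `p ∣ n`, this is the recursion
`C_Ω(n) = ∑_{p ∣ n} C_Ω(n / p)` of the multinomial coefficient `C_Ω(n)` of the exponents of `n`,
obtained by removing one of its `Ω(n)` prime factors.
-/

open Finset
open scoped ArithmeticFunction.zeta ArithmeticFunction.Moebius ArithmeticFunction.Omega
  ArithmeticFunction.omega

theorem Finsupp.multinomial_eq_sum_multinomial_tsub_single {α : Type*} {f : α →₀ ℕ}
    (hf : f ≠ 0) : f.multinomial = ∑ a ∈ f.support, (f - Finsupp.single a 1).multinomial := by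
  classical
  set s := f.support
  set N := ∑ a ∈ s, f a
  have hN : N ≠ 0 := by
    obtain ⟨a, ha⟩ := Finsupp.support_nonempty_iff.mpr hf
    exact (Finset.sum_pos' (fun _ _ => Nat.zero_le _)
      ⟨a, ha, Nat.pos_of_ne_zero (Finsupp.mem_support_iff.mp ha)⟩).ne'
  have key : ∀ a ∈ s,
      (∏ b ∈ s, (f b)!) * (f - Finsupp.single a 1).multinomial = f a * (N - 1)! := by
    intro a ha
    set f' : α →₀ ℕ := f - Finsupp.single a 1
    have hprod : ∏ b ∈ s, (f b)! = f a * ∏ b ∈ s, (f' b)! := by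
      rw [← Finset.mul_prod_erase s _ ha, ← Finset.mul_prod_erase s _ ha, ← mul_assoc,
        Finsupp.tsub_apply, Finsupp.single_eq_same,
        Nat.mul_factorial_pred (Finsupp.mem_support_iff.mp ha)]
      congr 1
      refine Finset.prod_congr rfl fun b hb => ?_
      rw [Finsupp.tsub_apply, Finsupp.single_eq_of_ne (Finset.ne_of_mem_erase hb), tsub_zero]
    have hsum : ∑ b ∈ s, f' b = N - 1 := by
      simp only [f', Finsupp.tsub_apply]
      rw [Finset.sum_tsub_distrib s fun b hb => ?_]
      · simp [Finsupp.single_apply, ha, N]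
      · have := Finsupp.mem_support_iff.mp hb
        rw [Finsupp.single_apply]
        split_ifs <;> omega
    rw [Finsupp.multinomial_eq_of_support_subset Finsupp.support_tsub, hprod, mul_assoc,
      Nat.multinomial_spec, hsum]
  apply Nat.eq_of_mul_eq_mul_left (Finset.prod_pos fun a _ => Nat.factorial_pos (f a))
  rw [Finset.mul_sum, Finset.sum_congr rfl key, ← Finset.sum_mul, Finsupp.multinomial_eq,
    Nat.multinomial_spec, Nat.mul_factorial_pred hN]

theorem COmega_eq_multinomial_factorization (n : ℕ) : COmega n = n.factorization.multinomial := by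
  rw [COmega, Finsupp.multinomial_eq, Nat.multinomial, cardFactors_eq_sum_factorization,
    Nat.support_factorization]
  rfl

theorem COmega_eq_sum_COmega_div {n : ℕ} (hn : 1 < n) :
    COmega n = ∑ p ∈ n.primeFactors, COmega (n / p) := by
  have hf : n.factorization ≠ 0 := by
    rw [Ne, Nat.factorization_eq_zero_iff']
    omega
  rw [COmega_eq_multinomial_factorization, Finsupp.multinomial_eq_sum_multinomial_tsub_single hf,
    Nat.support_factorization]
  refine sum_congr rfl fun p hp => ?_
  rw [COmega_eq_multinomial_factorization, Nat.factorization_div (Nat.dvd_of_mem_primeFactors hp),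
    (Nat.prime_of_mem_primeFactors hp).factorization]

namespace ArithmeticFunction

section PrimeIndicator

variable {R : Type*}

def primeIndicator [Semiring R] : ArithmeticFunction R :=
  ⟨fun n => if n.Prime then 1 else 0, by simp [Nat.not_prime_zero]⟩

theorem primeIndicator_apply [Semiring R] (n : ℕ) :
    (primeIndicator : ArithmeticFunction R) n = if n.Prime then 1 else 0 := rfl

theorem primeIndicator_mul_apply [Semiring R] (f : ArithmeticFunction R) (n : ℕ) :
    ((primeIndicator : ArithmeticFunction R) * f) n = ∑ p ∈ n.primeFactors, f (n / p) := by
  rw [mul_apply, Nat.sum_divisorsAntidiagonal (fun a b => primeIndicator a * f b),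
    Nat.primeFactors_eq_to_filter_divisors_prime, sum_filter]
  simp only [primeIndicator_apply, ite_mul, one_mul, zero_mul]

theorem primeIndicator_mul_zeta [Semiring R] :
    (primeIndicator : ArithmeticFunction R) * ζ = ω := by
  ext n
  have hζ : ∀ p ∈ n.primeFactors, (ζ : ArithmeticFunction R) (n / p) = 1 := fun p hp => by
    obtain ⟨hp, hpn, hn⟩ := Nat.mem_primeFactors.mp hp
    rw [natCoe_apply, zeta_apply, if_neg (Nat.div_ne_zero_iff_of_dvd hpn |>.mpr ⟨hn, hp.ne_zero⟩),
      Nat.cast_one]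
  rw [primeIndicator_mul_apply, sum_congr rfl hζ, sum_const, nsmul_one, natCoe_apply,
    cardDistinctFactors_apply, ← List.card_toFinset]
  rfl

theorem zeta_mul_one_add_primeIndicator [CommSemiring R] :
    (ζ : ArithmeticFunction R) * (1 + primeIndicator : ArithmeticFunction R) = ω + ζ := by
  rw [mul_add, mul_one, mul_comm, primeIndicator_mul_zeta, add_comm]

end PrimeIndicator

theorem apply_eq_of_sum_divisors_mul_eq_one {R : Type*} [CommSemiring R]
    {f h : ArithmeticFunction R} (hfh : f * h = 1) {g : ℕ → R}
    (hg : ∀ n ≠ 0, ∑ d ∈ n.divisors, f d * g (n / d) = (1 : ArithmeticFunction R) n)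
    {n : ℕ} (hn : n ≠ 0) : g n = h n := by
  let G : ArithmeticFunction R := ⟨fun n => if n = 0 then 0 else g n, rfl⟩
  have hG : ∀ m ≠ 0, G m = g m := fun m hm => if_neg hm
  have hfG : f * G = 1 := by
    ext m
    rcases eq_or_ne m 0 with rfl | hm
    · simp
    rw [← hg m hm, mul_apply, Nat.sum_divisorsAntidiagonal (fun a b => f a * G b)]
    refine sum_congr rfl fun d hd => ?_
    rw [Nat.mem_divisors] at hd
    rw [hG _ (Nat.div_ne_zero_iff_of_dvd hd.1 |>.mpr ⟨hm, ne_zero_of_dvd_ne_zero hm hd.1⟩)]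
  have hGh : G = h := by
    rw [← one_mul G, ← hfh, mul_comm f, mul_assoc, hfG, mul_one]
  rw [← hGh, hG n hn]

theorem liouville_eq_neg_liouville_div {n p : ℕ} (hp : p.Prime) (hpn : p ∣ n) :
    liouville n = -liouville (n / p) := by
  conv_lhs => rw [← Nat.div_mul_cancel hpn]
  rw [liouville_apply_mul, liouville_apply hp.ne_zero, cardFactors_apply_prime hp]
  ring

end ArithmeticFunction

open ArithmeticFunction

def liouvilleCOmega : ArithmeticFunction ℤ := ⟨fun n => liouville n * COmega n, by simp⟩

theorem liouvilleCOmega_apply (n : ℕ) : liouvilleCOmega n = liouville n * COmega n := rfl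

theorem one_add_primeIndicator_mul_liouvilleCOmega :
    (1 + primeIndicator) * liouvilleCOmega = 1 := by
  ext n
  rw [add_mul, one_mul, ArithmeticFunction.add_apply, primeIndicator_mul_apply]
  rcases Nat.lt_or_ge n 2 with hn | hn
  · interval_cases n <;> simp [liouvilleCOmega_apply, liouville_apply_one, COmega]
  have hdiv : ∀ p ∈ n.primeFactors, liouvilleCOmega (n / p) = -(liouville n * COmega (n / p)) := by
    intro p hp
    rw [liouvilleCOmega_apply, liouville_eq_neg_liouville_div (Nat.prime_of_mem_primeFactors hp)
      (Nat.dvd_of_mem_primeFactors hp), neg_mul, neg_neg]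
  rw [sum_congr rfl hdiv, sum_neg_distrib, ← mul_sum, ← Nat.cast_sum,
    ← COmega_eq_sum_COmega_div hn, liouvilleCOmega_apply, add_neg_cancel, one_apply_ne (by omega)]

theorem g_eq_sum_liouville_COmega_moebius
    (g : ℕ → ℤ)
    (hg1 : g 1 = 1)
    (hg : ∀ n : ℕ, 2 ≤ n → ∑ d ∈ n.divisors, ((cardDistinctFactors d : ℤ) + 1) * g (n / d) = 0) :
    ∀ n : ℕ, 1 ≤ n →
      g n = ∑ d ∈ n.divisors, (-1 : ℤ) ^ (cardFactors d) * (COmega d : ℤ) * moebius (n / d) := by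
  intro n hn
  have hinv : (ω + ζ : ArithmeticFunction ℤ) * (liouvilleCOmega * μ) = 1 := by
    rw [← zeta_mul_one_add_primeIndicator, mul_comm liouvilleCOmega, mul_mul_mul_comm,
      coe_zeta_mul_moebius, one_add_primeIndicator_mul_liouvilleCOmega, one_mul]
  have hconv : ∀ m ≠ 0, ∑ d ∈ m.divisors, (ω + ζ : ArithmeticFunction ℤ) d * g (m / d)
      = (1 : ArithmeticFunction ℤ) m := by
    intro m hm
    have hωζ : ∀ d ∈ m.divisors, (ω + ζ : ArithmeticFunction ℤ) d = ω d + 1 := fun d hd => by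
      simp [Nat.ne_of_gt (Nat.pos_of_mem_divisors hd)]
    rw [sum_congr rfl fun d hd => by rw [hωζ d hd]]
    rcases (Nat.one_le_iff_ne_zero.mpr hm).eq_or_lt with rfl | hm
    · simp [hg1]
    · rw [hg m hm, one_apply_ne hm.ne']
  rw [apply_eq_of_sum_divisors_mul_eq_one hinv hconv (by omega), mul_apply,
    Nat.sum_divisorsAntidiagonal (fun a b => liouvilleCOmega a * μ b)]
  refine sum_congr rfl fun d hd => ?_
  rw [liouvilleCOmega_apply, liouville_apply (Nat.pos_of_mem_divisors hd).ne']
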